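/- arXiv:1510.04925 — 3 statements merged into one kernel-verified Lean document; each statement's English description precedes it below -/
import Mathlib

section
/- If A is an n×n real matrix and B is an n×k real matrix satisfying the Kalman condition rk[B, AB, A²B, …, A^{n-1}B] = n, then for every t > 0 the controllability Gramian Γ_t = ∫₀ᵗ e^{-τA} B B* e^{-τA*} dτ is invertible. -/
open Matrix

/-- The controllability Gramian `Γ_t = ∫₀ᵗ e^{-τA} B Bᵀ e^{-τAᵀ} dτ` (entrywise integral). -/
noncomputable def Gram {n k : ℕ} (A : Matrix (Fin n) (Fin n) ℝ) (B : Matrix (Fin n) (Fin k) ℝ)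
    (t : ℝ) : Matrix (Fin n) (Fin n) ℝ :=
  fun i j => ∫ τ in (0:ℝ)..t,
    (NormedSpace.exp (-τ • A) * B * Bᵀ * NormedSpace.exp (-τ • Aᵀ)) i j

/-! If `Γ_t x = 0`, then `0 = xᵀ Γ_t x = ∫₀ᵗ |Bᵀ e^{-τAᵀ} x|² dτ`, so the continuous function
`τ ↦ Bᵀ e^{-τAᵀ} x` vanishes on `(0, t)`. Differentiating `j` times there gives
`(AʲB)ᵀ e^{-τAᵀ} x = 0`, i.e. `e^{-τAᵀ} x` is orthogonal to every column of `AʲB`. By the Kalman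
condition these columns span `ℝⁿ`, so `e^{-τAᵀ} x = 0` and hence `x = 0`. -/

open NormedSpace MeasureTheory Set

theorem dotProduct_mulVec_intervalIntegral {ι ι' : Type*} [Fintype ι] [Fintype ι']
    {M : ℝ → Matrix ι ι' ℝ} {a b : ℝ}
    (hM : ∀ i j, IntervalIntegrable (fun τ => M τ i j) volume a b) (x : ι → ℝ) (y : ι' → ℝ) :
    x ⬝ᵥ ((fun i j => ∫ τ in a..b, M τ i j : Matrix ι ι' ℝ) *ᵥ y) =
      ∫ τ in a..b, x ⬝ᵥ (M τ *ᵥ y) := by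
  have hint : ∀ i j, IntervalIntegrable (fun τ => x i * (M τ i j * y j)) volume a b :=
    fun i j => ((hM i j).mul_const _).const_mul _
  simp only [dotProduct, mulVec, Finset.mul_sum]
  rw [intervalIntegral.integral_finsetSum fun i _ => by
    simpa only [Finset.sum_fn] using IntervalIntegrable.sum Finset.univ fun j _ => hint i j]
  simp only [intervalIntegral.integral_finsetSum fun j _ => hint _ j,
    intervalIntegral.integral_const_mul, intervalIntegral.integral_mul_const]

theorem eqOn_zero_of_intervalIntegral_eq_zero {f : ℝ → ℝ} {a b : ℝ} (hab : a < b)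
    (hf : ContinuousOn f (Icc a b)) (hf0 : ∀ τ ∈ Ioc a b, 0 ≤ f τ)
    (hint : ∫ τ in a..b, f τ = 0) : EqOn f 0 (Ioc a b) := by
  intro c hc
  by_contra hne
  have hpos : 0 < f c := (hf0 c hc).lt_of_ne' hne
  exact (intervalIntegral.integral_pos hab hf hf0 ⟨c, Ioc_subset_Icc_self hc, hpos⟩).ne' hint

theorem eq_zero_of_span_pow_mul_mulVec_eq_top {m ι : Type*} [Fintype m] [DecidableEq m]
    [Fintype ι] {R : Type*} [Field R] [LinearOrder R] [IsStrictOrderedRing R]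
    {A : Matrix m m R} {B : Matrix m ι R} {N : ℕ}
    (hspan : Submodule.span R {v | ∃ j < N, ∃ x : ι → R, v = (A ^ j * B) *ᵥ x} = ⊤)
    {y : m → R} (hy : ∀ j < N, (A ^ j * B)ᵀ *ᵥ y = 0) : y = 0 := by
  have horth : dotProductBilin R R y = 0 := by
    refine LinearMap.ext_on hspan ?_
    rintro _ ⟨j, hj, x, rfl⟩
    change y ⬝ᵥ ((A ^ j * B) *ᵥ x) = 0
    rw [dotProduct_mulVec, ← mulVec_transpose, hy j hj, zero_dotProduct]
  rw [← dotProduct_self_eq_zero]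
  exact LinearMap.congr_fun horth y

section MatrixExp

attribute [local instance] Matrix.linftyOpNormedRing Matrix.linftyOpNormedAlgebra

variable {m m' : Type*} [Fintype m] [DecidableEq m] [Fintype m']

theorem continuous_exp_neg_smul (A : Matrix m m ℝ) : Continuous fun τ : ℝ => exp (-τ • A) :=
  exp_continuous.comp (continuous_neg.smul continuous_const)

theorem hasDerivAt_exp_neg_smul (A : Matrix m m ℝ) (τ : ℝ) :
    HasDerivAt (fun τ : ℝ => exp (-τ • A)) (-(A * exp (-τ • A))) τ := by
  have h := (hasDerivAt_exp_smul_const' (𝕂 := ℝ) A (-τ)).scomp τ (hasDerivAt_neg τ)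
  rw [Function.comp_def] at h
  simp only [neg_smul, one_smul] at h ⊢
  exact h

theorem hasDerivAt_mulVec_exp_neg_smul (C : Matrix m' m ℝ) (A : Matrix m m ℝ) (x : m → ℝ)
    (τ : ℝ) : HasDerivAt (fun τ : ℝ => C *ᵥ (exp (-τ • A) *ᵥ x))
      (-((C * A) *ᵥ (exp (-τ • A) *ᵥ x))) τ := by
  let L : Matrix m m ℝ →ₗ[ℝ] (m' → ℝ) := mulVecLin C ∘ₗ (mulVecBilin ℝ ℝ).flip x
  have h : HasDerivAt (fun τ : ℝ => C *ᵥ (exp (-τ • A) *ᵥ x)) (L (-(A * exp (-τ • A)))) τ :=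
    L.toContinuousLinearMap.hasFDerivAt.comp_hasDerivAt τ (hasDerivAt_exp_neg_smul A τ)
  convert h using 1
  simp [L, mulVec_neg, mulVec_mulVec, Matrix.mul_assoc]

end MatrixExp

theorem mul_pow_mulVec_exp_neg_smul_eq_zero {m m' : Type*} [Fintype m] [DecidableEq m]
    [Fintype m'] {U : Set ℝ} (hU : IsOpen U) {C : Matrix m' m ℝ} {A : Matrix m m ℝ}
    {x : m → ℝ} (h : ∀ τ ∈ U, C *ᵥ (exp (-τ • A) *ᵥ x) = 0) (j : ℕ) :
    ∀ τ ∈ U, (C * A ^ j) *ᵥ (exp (-τ • A) *ᵥ x) = 0 := by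
  induction j with
  | zero => simpa using h
  | succ j ih =>
    intro τ hτ
    have hzero : HasDerivAt (fun τ : ℝ => (C * A ^ j) *ᵥ (exp (-τ • A) *ᵥ x)) 0 τ :=
      (hasDerivAt_const τ 0).congr_of_eventuallyEq
        (Filter.eventuallyEq_of_mem (hU.mem_nhds hτ) ih)
    have := (hasDerivAt_mulVec_exp_neg_smul (C * A ^ j) A x τ).unique hzero
    rwa [neg_eq_zero, Matrix.mul_assoc, ← pow_succ] at this

theorem dotProduct_gram_mulVec {n k : ℕ} (A : Matrix (Fin n) (Fin n) ℝ)
    (B : Matrix (Fin n) (Fin k) ℝ) (t : ℝ) (x : Fin n → ℝ) :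
    x ⬝ᵥ (Gram A B t *ᵥ x) =
      ∫ τ in 0..t, (Bᵀ *ᵥ (exp (-τ • Aᵀ) *ᵥ x)) ⬝ᵥ (Bᵀ *ᵥ (exp (-τ • Aᵀ) *ᵥ x)) := by
  have hcont : Continuous fun τ : ℝ => exp (-τ • A) * B * Bᵀ * exp (-τ • Aᵀ) :=
    (((continuous_exp_neg_smul A).matrix_mul continuous_const).matrix_mul
      continuous_const).matrix_mul (continuous_exp_neg_smul Aᵀ)
  unfold Gram
  rw [dotProduct_mulVec_intervalIntegral fun i j =>
    (hcont.matrix_elem i j).intervalIntegrable 0 t]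
  refine intervalIntegral.integral_congr fun τ _ => ?_
  rw [← transpose_smul, Matrix.exp_transpose, Matrix.mul_assoc _ Bᵀ, ← mulVec_mulVec,
    dotProduct_mulVec, ← mulVec_transpose, transpose_mul, mulVec_mulVec]

theorem gramian_isUnit_of_kalman_general {n k : ℕ}
    (A : Matrix (Fin n) (Fin n) ℝ) (B : Matrix (Fin n) (Fin k) ℝ)
    (hKalman : Submodule.span ℝ
      {v : Fin n → ℝ | ∃ j < n, ∃ x : Fin k → ℝ, v = (A ^ j * B) *ᵥ x} = ⊤)
    (t : ℝ) (ht : 0 < t) : IsUnit (Gram A B t) := by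
  rw [isUnit_iff_isUnit_det, isUnit_iff_ne_zero, Ne, ← exists_mulVec_eq_zero_iff]
  rintro ⟨x, hx0, hGx⟩
  have hw : ∀ τ ∈ Ioo 0 t, Bᵀ *ᵥ (exp (-τ • Aᵀ) *ᵥ x) = 0 := by
    have hcont : Continuous fun τ : ℝ => Bᵀ *ᵥ (exp (-τ • Aᵀ) *ᵥ x) :=
      continuous_const.matrix_mulVec
        ((continuous_exp_neg_smul Aᵀ).matrix_mulVec continuous_const)
    have hsq := eqOn_zero_of_intervalIntegral_eq_zero ht (hcont.dotProduct hcont).continuousOn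
      (fun τ _ => Fintype.sum_nonneg fun _ => mul_self_nonneg _)
      (by rw [← dotProduct_gram_mulVec, hGx, dotProduct_zero])
    exact fun τ hτ => dotProduct_self_eq_zero.mp (hsq (Ioo_subset_Ioc_self hτ))
  have hy : ∀ j < n, (A ^ j * B)ᵀ *ᵥ (exp (-(t / 2) • Aᵀ) *ᵥ x) = 0 := by
    intro j _
    rw [transpose_mul, transpose_pow]
    exact mul_pow_mulVec_exp_neg_smul_eq_zero isOpen_Ioo hw j (t / 2) ⟨by positivity, by linarith⟩
  refine hx0 (mulVec_injective_iff_isUnit.mpr (Matrix.isUnit_exp (-(t / 2) • Aᵀ)) ?_)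
  rw [eq_zero_of_span_pow_mul_mulVec_eq_top hKalman hy, mulVec_zero]

/-- under the Kalman condition, the Gramian is invertible for every `t > 0`. -/
theorem gramian_isUnit_of_kalman {n k : ℕ} (hk : 1 ≤ k) (hkn : k ≤ n)
    (A : Matrix (Fin n) (Fin n) ℝ) (B : Matrix (Fin n) (Fin k) ℝ)
    (hKalman : Submodule.span ℝ
      {v : Fin n → ℝ | ∃ j < n, ∃ x : Fin k → ℝ, v = (A ^ j * B) *ᵥ x} = ⊤)
    (t : ℝ) (ht : 0 < t) : IsUnit (Gram A B t) :=
  gramian_isUnit_of_kalman_general A B hKalman t ht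
end

section
/- Let E_i = span{A^j B x : x ∈ ℝ^k, 0 ≤ j ≤ i-1} and k_i = dim E_i, with k_0 = 0. Then the differences d_i = k_i - k_{i-1} form a non-increasing sequence: d_1 ≥ d_2 ≥ … ≥ d_m. -/
open Matrix

/-- The controllability filtration `E_i = span{A^j B x : 0 ≤ j ≤ i-1}`. -/
noncomputable def ctrlFlag {n k : ℕ} (A : Matrix (Fin n) (Fin n) ℝ)
    (B : Matrix (Fin n) (Fin k) ℝ) (i : ℕ) : Submodule ℝ (Fin n → ℝ) :=
  Submodule.span ℝ {v : Fin n → ℝ | ∃ j < i, ∃ x : Fin k → ℝ, v = (A ^ j * B) *ᵥ x}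

lemma ctrlFlag_mono {n k : ℕ} (A : Matrix (Fin n) (Fin n) ℝ)
    (B : Matrix (Fin n) (Fin k) ℝ) {i j : ℕ} (h : i ≤ j) :
    ctrlFlag A B i ≤ ctrlFlag A B j := by
  apply Submodule.span_mono
  rintro v ⟨l, hl, x, rfl⟩
  exact ⟨l, lt_of_lt_of_le hl h, x, rfl⟩

lemma ctrlFlag_succ {n k : ℕ} (A : Matrix (Fin n) (Fin n) ℝ)
    (B : Matrix (Fin n) (Fin k) ℝ) (j : ℕ) :
    ctrlFlag A B (j + 1) = ctrlFlag A B 1 ⊔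
      Submodule.map A.mulVecLin (ctrlFlag A B j) := by
  have hset : {v : Fin n → ℝ | ∃ l < j + 1, ∃ x : Fin k → ℝ, v = (A ^ l * B) *ᵥ x} =
      {v : Fin n → ℝ | ∃ l < 1, ∃ x : Fin k → ℝ, v = (A ^ l * B) *ᵥ x} ∪
      (A.mulVecLin '' {v : Fin n → ℝ | ∃ l < j, ∃ x : Fin k → ℝ, v = (A ^ l * B) *ᵥ x}) := by
    ext v
    constructor
    · rintro ⟨l, hl, x, rfl⟩
      rcases l with _ | l'
      · exact Or.inl ⟨0, by omega, x, rfl⟩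
      · refine Or.inr ⟨(A ^ l' * B) *ᵥ x, ⟨l', by omega, x, rfl⟩, ?_⟩
        rw [mulVecLin_apply, mulVec_mulVec, pow_succ', ← Matrix.mul_assoc]
    · rintro (⟨l, hl, x, rfl⟩ | ⟨w, ⟨l, hl, x, rfl⟩, rfl⟩)
      · exact ⟨l, by omega, x, rfl⟩
      · refine ⟨l + 1, by omega, x, ?_⟩
        rw [mulVecLin_apply, mulVec_mulVec, pow_succ', ← Matrix.mul_assoc]
  rw [ctrlFlag, hset, Submodule.span_union, ← Submodule.map_span]
  rfl

lemma ctrlFlag_succ' {n k : ℕ} (A : Matrix (Fin n) (Fin n) ℝ)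
    (B : Matrix (Fin n) (Fin k) ℝ) {i : ℕ} (hi : 1 ≤ i) :
    ctrlFlag A B (i + 1) = ctrlFlag A B i ⊔
      Submodule.map A.mulVecLin (ctrlFlag A B i) := by
  refine le_antisymm ?_ ?_
  · rw [ctrlFlag_succ]
    exact sup_le_sup_right (ctrlFlag_mono A B hi) _
  · refine sup_le (ctrlFlag_mono A B (by omega)) ?_
    rw [ctrlFlag_succ]
    exact le_sup_right

lemma finrank_map_add_finrank_inf_ker {n : ℕ} (f : (Fin n → ℝ) →ₗ[ℝ] (Fin n → ℝ))
    (p : Submodule ℝ (Fin n → ℝ)) :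
    Module.finrank ℝ (p.map f) + Module.finrank ℝ (LinearMap.ker f ⊓ p : Submodule ℝ (Fin n → ℝ))
      = Module.finrank ℝ p := by
  have h := LinearMap.finrank_range_add_finrank_ker (f.domRestrict p)
  rw [LinearMap.range_domRestrict, LinearMap.ker_domRestrict] at h
  rw [← h]
  congr 1
  rw [inf_comm, ← Submodule.map_comap_subtype p (LinearMap.ker f)]
  exact (Submodule.equivSubtypeMap p _).symm.finrank_eq

/-- the increments `d_i = k_i - k_{i-1}` of the dimensions of the
controllability filtration are non-increasing, i.e. `d_{i+1} ≤ d_i`, stated additively as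
`k_{i+1} + k_{i-1} ≤ 2 k_i` for `1 ≤ i ≤ m - 1`, where `m` is the step. -/
theorem ctrlFlag_dim_increments_antitone {n k m : ℕ} (hk : 1 ≤ k) (hkn : k ≤ n)
    (A : Matrix (Fin n) (Fin n) ℝ) (B : Matrix (Fin n) (Fin k) ℝ)
    (hstep : Module.finrank ℝ (ctrlFlag A B m) = n)
    (hmin : ∀ l < m, Module.finrank ℝ (ctrlFlag A B l) ≠ n) :
    ∀ i : ℕ, 1 ≤ i → i + 1 ≤ m →
      Module.finrank ℝ (ctrlFlag A B (i + 1)) + Module.finrank ℝ (ctrlFlag A B (i - 1))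
        ≤ 2 * Module.finrank ℝ (ctrlFlag A B i) := by
  intro i hi _
  set f := A.mulVecLin
  set p := ctrlFlag A B (i - 1)
  set q := ctrlFlag A B i with hq
  have hpq : p ≤ q := ctrlFlag_mono A B (by omega)
  have h2 : q = ctrlFlag A B 1 ⊔ Submodule.map f p := by
    rw [hq, show i = (i - 1) + 1 by omega, ctrlFlag_succ]
  have h1 : ctrlFlag A B (i + 1) = q ⊔ Submodule.map f q := ctrlFlag_succ' A B hi
  have hsup : Module.finrank ℝ ↥(q ⊔ Submodule.map f q) +
      Module.finrank ℝ ↥(q ⊓ Submodule.map f q) =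
      Module.finrank ℝ q + Module.finrank ℝ (Submodule.map f q) :=
    Submodule.finrank_sup_add_finrank_inf_eq _ _
  have hrn1 := finrank_map_add_finrank_inf_ker f q
  have hrn2 := finrank_map_add_finrank_inf_ker f p
  have hle1 : Module.finrank ℝ (Submodule.map f p) ≤
      Module.finrank ℝ ↥(q ⊓ Submodule.map f q) := by
    apply Submodule.finrank_mono
    refine le_inf ?_ (Submodule.map_mono hpq)
    rw [h2]; exact le_sup_right
  have hle2 : Module.finrank ℝ ↥(LinearMap.ker f ⊓ p) ≤
      Module.finrank ℝ ↥(LinearMap.ker f ⊓ q) :=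
    Submodule.finrank_mono (inf_le_inf_left _ hpq)
  rw [h1]
  omega
end

section
/- Under the Kalman condition, the optimal cost of the LQ problem satisfies S_T(x₁, x₂) = ½ p₀* Γ_T p₀ with p₀ = Γ_T⁻¹(e^{-TA}x₂ - x₁); equivalently S_T(x₁,x₂) = ½ (e^{-TA}x₂ - x₁)* Γ_T⁻¹ (e^{-TA}x₂ - x₁). -/
/-!
If `Γ_T p = e^{-TA}x₂ - x₁`, every admissible control `u` satisfies
`∫₀ᵀ ⟨B* e^{-τA*} p, u⟩ = p* Γ_T p`; completing the square against the control
`τ ↦ B* e^{-τA*} p`, which is itself admissible with cost `½ p* Γ_T p`, identifies the infimum.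
Such a `p` exists because the Kalman condition makes `Γ_T` invertible:
`p* Γ_T p = ∫₀ᵀ |B* e^{-τA*} p|²`, and if `B* e^{-τA*} p` vanishes on `(0, T)` then differentiating repeatedly and letting `τ → 0`
gives `B* (A*)ʲ p = 0` for all `j`, i.e. `p` is orthogonal to the range of `[B, AB, …, A^{n-1}B]`.
-/

open Matrix

namespace LQ

variable {m ι : Type*} [Fintype m]

theorem dotProduct_intervalIntegral (p : m → ℝ) {f : ℝ → m → ℝ} {a b : ℝ}
    (hf : IntervalIntegrable f MeasureTheory.volume a b) :
    p ⬝ᵥ ∫ τ in a..b, f τ = ∫ τ in a..b, p ⬝ᵥ f τ :=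
  ((dotProductBilin ℝ ℝ p).toContinuousLinearMap.intervalIntegral_comp_comm hf).symm

theorem mulVec_eq_intervalIntegral_of_entries {m' : Type*} [Fintype m'] {M : Matrix m m' ℝ}
    {F : ℝ → Matrix m m' ℝ} (hF : Continuous F) {a b : ℝ}
    (hM : ∀ i j, M i j = ∫ τ in a..b, F τ i j) (q : m' → ℝ) :
    M *ᵥ q = ∫ τ in a..b, F τ *ᵥ q := by
  funext i
  have hcomp := (ContinuousLinearMap.proj i : (m → ℝ) →L[ℝ] ℝ).intervalIntegral_comp_comm
    ((hF.matrix_mulVec (continuous_const (y := q))).intervalIntegrable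
      (μ := MeasureTheory.volume) a b)
  simp only [ContinuousLinearMap.proj_apply] at hcomp
  rw [← hcomp]
  simp only [mulVec, dotProduct, hM]
  rw [intervalIntegral.integral_finsetSum (f := fun j τ => F τ i j * q j) fun j _ =>
    ((hF.matrix_elem i j).mul continuous_const).intervalIntegrable a b]
  simp only [intervalIntegral.integral_mul_const]

variable [DecidableEq m]

section MatrixExp

-- Matrices carry no global norm; any algebra norm induces their topology, so it serves for `exp`.
attribute [local instance] Matrix.linftyOpNormedRing Matrix.linftyOpNormedAlgebra

theorem continuous_exp_neg_smul (M : Matrix m m ℝ) :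
    Continuous fun τ : ℝ => NormedSpace.exp (-τ • M) :=
  NormedSpace.exp_continuous.comp (continuous_neg.smul continuous_const)

theorem hasDerivAt_mulVec_exp_neg_smul_mulVec [Fintype ι] (C : Matrix ι m ℝ)
    (M : Matrix m m ℝ) (q : m → ℝ) (τ : ℝ) :
    HasDerivAt (fun τ : ℝ => C *ᵥ (NormedSpace.exp (-τ • M) *ᵥ q))
      (-(C *ᵥ (NormedSpace.exp (-τ • M) *ᵥ (M *ᵥ q)))) τ := by
  let L : Matrix m m ℝ →L[ℝ] ι → ℝ :=
    LinearMap.toContinuousLinearMap ((mulVecLin C).comp ((mulVecBilin ℝ ℝ).flip q))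
  have hexp := (hasDerivAt_exp_smul_const M (-τ)).scomp τ (hasDerivAt_neg τ)
  refine (L.hasFDerivAt.comp_hasDerivAt τ hexp).congr_deriv ?_
  change C *ᵥ (((-1 : ℝ) • (NormedSpace.exp (-τ • M) * M)) *ᵥ q) = _
  simp [neg_mulVec, mulVec_neg]

end MatrixExp

theorem mulVec_pow_mulVec_eq_zero_of_mulVec_exp_eq_zero [Fintype ι] (C : Matrix ι m ℝ)
    (M : Matrix m m ℝ) (q : m → ℝ) {T : ℝ} (hT : 0 < T)
    (h : ∀ τ ∈ Set.Ioo 0 T, C *ᵥ (NormedSpace.exp (-τ • M) *ᵥ q) = 0) (j : ℕ) :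
    C *ᵥ (M ^ j *ᵥ q) = 0 := by
  have hderiv : ∀ j : ℕ, ∀ τ ∈ Set.Ioo 0 T,
      C *ᵥ (NormedSpace.exp (-τ • M) *ᵥ (M ^ j *ᵥ q)) = 0 := by
    intro j
    induction j with
    | zero => simpa using h
    | succ j ih =>
      intro τ hτ
      rw [pow_succ', ← mulVec_mulVec]
      have hconst : (fun σ : ℝ => C *ᵥ (NormedSpace.exp (-σ • M) *ᵥ (M ^ j *ᵥ q)))
          =ᶠ[nhds τ] fun _ => 0 :=
        Filter.eventually_of_mem (Ioo_mem_nhds hτ.1 hτ.2) ih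
      have := (hasDerivAt_mulVec_exp_neg_smul_mulVec C M _ τ).unique
        ((hasDerivAt_const τ 0).congr_of_eventuallyEq hconst)
      exact neg_eq_zero.mp this
  have hcont : Continuous fun τ : ℝ => C *ᵥ (NormedSpace.exp (-τ • M) *ᵥ (M ^ j *ᵥ q)) :=
    continuous_const.matrix_mulVec ((continuous_exp_neg_smul M).matrix_mulVec continuous_const)
  have h0 : (0 : ℝ) ∈ closure (Set.Ioo 0 T) := by
    rw [closure_Ioo hT.ne]
    exact ⟨le_rfl, hT.le⟩
  simpa using Set.EqOn.closure (hderiv j) hcont continuous_const h0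

theorem eq_zero_of_transpose_mulVec_pow_eq_zero [Fintype ι] {A : Matrix m m ℝ}
    {B : Matrix m ι ℝ} {N : ℕ}
    (hKalman : Submodule.span ℝ {v | ∃ j < N, ∃ x : ι → ℝ, v = (A ^ j * B) *ᵥ x} = ⊤)
    {p : m → ℝ} (h : ∀ j, Bᵀ *ᵥ (Aᵀ ^ j *ᵥ p) = 0) : p = 0 := by
  have hspan : Submodule.span ℝ {v | ∃ j < N, ∃ x : ι → ℝ, v = (A ^ j * B) *ᵥ x}
      ≤ LinearMap.ker (dotProductBilin ℝ ℝ p) := by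
    rw [Submodule.span_le]
    rintro _ ⟨j, -, x, rfl⟩
    simp [dotProduct_mulVec, ← mulVec_transpose, transpose_pow, ← mulVec_mulVec, h j]
  rw [hKalman, top_le_iff] at hspan
  have : p ∈ LinearMap.ker (dotProductBilin ℝ ℝ p) := hspan ▸ Submodule.mem_top
  exact dotProduct_self_eq_zero.mp this

noncomputable def adjointControl (A : Matrix m m ℝ) (B : Matrix m ι ℝ) (p : m → ℝ) (τ : ℝ) :
    ι → ℝ :=
  Bᵀ *ᵥ (NormedSpace.exp (-τ • Aᵀ) *ᵥ p)

theorem continuous_adjointControl (A : Matrix m m ℝ) (B : Matrix m ι ℝ) (p : m → ℝ) :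
    Continuous (adjointControl A B p) :=
  continuous_const.matrix_mulVec ((continuous_exp_neg_smul Aᵀ).matrix_mulVec continuous_const)

theorem dotProduct_exp_mulVec_mulVec [Fintype ι] (A : Matrix m m ℝ) (B : Matrix m ι ℝ) (p : m → ℝ)
    (τ : ℝ) (w : ι → ℝ) :
    p ⬝ᵥ (NormedSpace.exp (-τ • A) *ᵥ (B *ᵥ w)) = adjointControl A B p τ ⬝ᵥ w := by
  rw [adjointControl, ← transpose_smul, exp_transpose, mulVec_transpose, mulVec_transpose,
    ← dotProduct_mulVec, ← dotProduct_mulVec]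

theorem dotProduct_intervalIntegral_exp_mulVec [Fintype ι] (A : Matrix m m ℝ) (B : Matrix m ι ℝ)
    (p : m → ℝ) {u : ℝ → ι → ℝ} (hu : Continuous u) (T : ℝ) :
    p ⬝ᵥ (∫ τ in (0:ℝ)..T, NormedSpace.exp (-τ • A) *ᵥ (B *ᵥ u τ))
      = ∫ τ in (0:ℝ)..T, adjointControl A B p τ ⬝ᵥ u τ := by
  rw [dotProduct_intervalIntegral p (((continuous_exp_neg_smul A).matrix_mulVec
    (continuous_const.matrix_mulVec hu)).intervalIntegrable 0 T)]
  simp only [dotProduct_exp_mulVec_mulVec]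

theorem two_mul_integral_dotProduct_sub_le [Fintype ι] {u w : ℝ → ι → ℝ} (hu : Continuous u)
    (hw : Continuous w) {a b : ℝ} (hab : a ≤ b) :
    2 * (∫ τ in a..b, w τ ⬝ᵥ u τ) - ∫ τ in a..b, w τ ⬝ᵥ w τ ≤ ∫ τ in a..b, u τ ⬝ᵥ u τ := by
  have hwu : Continuous fun τ => 2 * (w τ ⬝ᵥ u τ) := continuous_const.mul (hw.dotProduct hu)
  rw [← intervalIntegral.integral_const_mul, ← intervalIntegral.integral_sub
    (hwu.intervalIntegrable a b) ((hw.dotProduct hw).intervalIntegrable a b)]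
  refine intervalIntegral.integral_mono_on hab
    ((hwu.sub (hw.dotProduct hw)).intervalIntegrable a b)
    ((hu.dotProduct hu).intervalIntegrable a b) fun τ _ => ?_
  have hsq : 0 ≤ (u τ - w τ) ⬝ᵥ (u τ - w τ) := by
    simpa using dotProduct_self_star_nonneg (u τ - w τ)
  rw [sub_dotProduct, dotProduct_sub, dotProduct_sub, dotProduct_comm (u τ) (w τ)] at hsq
  linarith

theorem exp_smul_mulVec_eq_iff (A : Matrix m m ℝ) (T : ℝ) (y z : m → ℝ) :
    NormedSpace.exp (T • A) *ᵥ y = z ↔ y = NormedSpace.exp (-T • A) *ᵥ z := by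
  have hdet := (isUnit_iff_isUnit_det _).mp (isUnit_exp (T • A))
  rw [neg_smul, exp_neg]
  constructor
  · rintro rfl
    rw [mulVec_mulVec, nonsing_inv_mul _ hdet, one_mulVec]
  · rintro rfl
    rw [mulVec_mulVec, mul_nonsing_inv _ hdet, one_mulVec]

section Gramian

variable {n k : ℕ} (A : Matrix (Fin n) (Fin n) ℝ) (B : Matrix (Fin n) (Fin k) ℝ)

theorem gram_mulVec (T : ℝ) (q : Fin n → ℝ) :
    Gram A B T *ᵥ q
      = ∫ τ in (0:ℝ)..T, NormedSpace.exp (-τ • A) *ᵥ (B *ᵥ adjointControl A B q τ) := by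
  have hkernel : Continuous fun τ : ℝ =>
      NormedSpace.exp (-τ • A) * B * Bᵀ * NormedSpace.exp (-τ • Aᵀ) :=
    (((continuous_exp_neg_smul A).matrix_mul continuous_const).matrix_mul
      continuous_const).matrix_mul (continuous_exp_neg_smul Aᵀ)
  rw [mulVec_eq_intervalIntegral_of_entries (M := Gram A B T) hkernel (fun _ _ => rfl)]
  simp only [adjointControl, mulVec_mulVec, Matrix.mul_assoc]

theorem dotProduct_gram_mulVec (T : ℝ) (p q : Fin n → ℝ) :
    p ⬝ᵥ (Gram A B T *ᵥ q)
      = ∫ τ in (0:ℝ)..T, adjointControl A B p τ ⬝ᵥ adjointControl A B q τ := by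
  rw [gram_mulVec, dotProduct_intervalIntegral_exp_mulVec A B p (continuous_adjointControl A B q)]

theorem dotProduct_gram_mulVec_self_pos
    (hKalman : Submodule.span ℝ
      {v : Fin n → ℝ | ∃ j < n, ∃ x : Fin k → ℝ, v = (A ^ j * B) *ᵥ x} = ⊤)
    {T : ℝ} (hT : 0 < T) {p : Fin n → ℝ} (hp : p ≠ 0) :
    0 < p ⬝ᵥ (Gram A B T *ᵥ p) := by
  have hnonneg : ∀ τ, 0 ≤ adjointControl A B p τ ⬝ᵥ adjointControl A B p τ := fun τ => by
    simpa using dotProduct_self_star_nonneg (adjointControl A B p τ)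
  rw [dotProduct_gram_mulVec]
  refine intervalIntegral.integral_pos hT
    ((continuous_adjointControl A B p).dotProduct (continuous_adjointControl A B p)).continuousOn
    (fun τ _ => hnonneg τ) ?_
  by_contra! hzero
  refine hp (eq_zero_of_transpose_mulVec_pow_eq_zero hKalman fun j =>
    mulVec_pow_mulVec_eq_zero_of_mulVec_exp_eq_zero Bᵀ Aᵀ p hT (fun τ hτ => ?_) j)
  exact dotProduct_self_eq_zero.mp
    ((hzero τ (Set.Ioo_subset_Icc_self hτ)).antisymm (hnonneg τ))

theorem isUnit_gram
    (hKalman : Submodule.span ℝ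
      {v : Fin n → ℝ | ∃ j < n, ∃ x : Fin k → ℝ, v = (A ^ j * B) *ᵥ x} = ⊤)
    {T : ℝ} (hT : 0 < T) : IsUnit (Gram A B T) := by
  rw [isUnit_iff_isUnit_det, isUnit_iff_ne_zero, ne_eq, ← exists_mulVec_eq_zero_iff]
  rintro ⟨p, hp, hGp⟩
  simpa [hGp] using dotProduct_gram_mulVec_self_pos A B hKalman hT hp

theorem isLeast_cost_of_gram_mulVec {T : ℝ} (hT : 0 ≤ T) (p : Fin n → ℝ) :
    IsLeast {c : ℝ | ∃ u : ℝ → Fin k → ℝ, Continuous u ∧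
        ∫ τ in (0:ℝ)..T, NormedSpace.exp (-τ • A) *ᵥ (B *ᵥ u τ) = Gram A B T *ᵥ p ∧
        c = (1/2) * ∫ s in (0:ℝ)..T, ∑ i, (u s i) ^ 2}
      ((1/2) * (p ⬝ᵥ (Gram A B T *ᵥ p))) := by
  have hsq : ∀ (u : ℝ → Fin k → ℝ) (s : ℝ), ∑ i, (u s i) ^ 2 = u s ⬝ᵥ u s := fun u s => by
    simp only [dotProduct, sq]
  simp_rw [hsq]
  refine ⟨⟨adjointControl A B p, continuous_adjointControl A B p, (gram_mulVec A B T p).symm,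
    by rw [dotProduct_gram_mulVec]⟩, ?_⟩
  rintro c ⟨u, hu, hsteer, rfl⟩
  have hcross : ∫ τ in (0:ℝ)..T, adjointControl A B p τ ⬝ᵥ u τ = p ⬝ᵥ (Gram A B T *ᵥ p) := by
    rw [← dotProduct_intervalIntegral_exp_mulVec A B p hu, hsteer]
  have hle := two_mul_integral_dotProduct_sub_le hu (continuous_adjointControl A B p) hT
  rw [hcross, ← dotProduct_gram_mulVec] at hle
  linarith

end Gramian

end LQ

open LQ in
theorem optimal_cost_LQ_general {n k : ℕ}
    (A : Matrix (Fin n) (Fin n) ℝ) (B : Matrix (Fin n) (Fin k) ℝ)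
    (hKalman : Submodule.span ℝ
      {v : Fin n → ℝ | ∃ j < n, ∃ x : Fin k → ℝ, v = (A ^ j * B) *ᵥ x} = ⊤)
    (T : ℝ) (hT : 0 < T) (x₁ x₂ : Fin n → ℝ) :
    sInf {c : ℝ | ∃ u : ℝ → Fin k → ℝ, Continuous u ∧
        NormedSpace.exp (T • A) *ᵥ
          (x₁ + ∫ τ in (0:ℝ)..T, NormedSpace.exp (-τ • A) *ᵥ (B *ᵥ u τ)) = x₂ ∧
        c = (1/2) * ∫ s in (0:ℝ)..T, ∑ i, (u s i) ^ 2}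
      = (1/2) * (((Gram A B T)⁻¹ *ᵥ (NormedSpace.exp (-T • A) *ᵥ x₂ - x₁)) ⬝ᵥ
          (Gram A B T *ᵥ ((Gram A B T)⁻¹ *ᵥ (NormedSpace.exp (-T • A) *ᵥ x₂ - x₁)))) ∧
    (1/2) * (((Gram A B T)⁻¹ *ᵥ (NormedSpace.exp (-T • A) *ᵥ x₂ - x₁)) ⬝ᵥ
          (Gram A B T *ᵥ ((Gram A B T)⁻¹ *ᵥ (NormedSpace.exp (-T • A) *ᵥ x₂ - x₁))))
      = (1/2) * ((NormedSpace.exp (-T • A) *ᵥ x₂ - x₁) ⬝ᵥ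
          ((Gram A B T)⁻¹ *ᵥ (NormedSpace.exp (-T • A) *ᵥ x₂ - x₁))) := by
  set v := NormedSpace.exp (-T • A) *ᵥ x₂ - x₁
  have hGv : Gram A B T *ᵥ ((Gram A B T)⁻¹ *ᵥ v) = v := by
    have hdet := (isUnit_iff_isUnit_det _).mp (isUnit_gram A B hKalman hT)
    rw [mulVec_mulVec, mul_nonsing_inv _ hdet, one_mulVec]
  have hsteer : ∀ y, NormedSpace.exp (T • A) *ᵥ (x₁ + y) = x₂ ↔ y = v := fun y => by
    rw [exp_smul_mulVec_eq_iff, eq_sub_iff_add_eq']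
  have hleast := isLeast_cost_of_gram_mulVec A B hT.le ((Gram A B T)⁻¹ *ᵥ v)
  rw [hGv] at hleast ⊢
  simp_rw [hsteer]
  exact ⟨hleast.csInf_eq, by rw [dotProduct_comm]⟩

/-- under the Kalman condition, the optimal cost of the LQ problem is
`S_T(x₁,x₂) = ½ p₀* Γ_T p₀ = ½ (e^{-TA}x₂ - x₁)* Γ_T⁻¹ (e^{-TA}x₂ - x₁)` where
`p₀ = Γ_T⁻¹ (e^{-TA}x₂ - x₁)`.  The infimum is over (continuous) controls steering
`x₁` to `x₂` in time `T`, the trajectory being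
`x_u(t) = e^{tA}(x₁ + ∫₀ᵗ e^{-τA} B u(τ) dτ)`. -/
theorem optimal_cost_LQ {n k : ℕ} (hk : 1 ≤ k) (hkn : k ≤ n)
    (A : Matrix (Fin n) (Fin n) ℝ) (B : Matrix (Fin n) (Fin k) ℝ)
    (hKalman : Submodule.span ℝ
      {v : Fin n → ℝ | ∃ j < n, ∃ x : Fin k → ℝ, v = (A ^ j * B) *ᵥ x} = ⊤)
    (T : ℝ) (hT : 0 < T) (x₁ x₂ : Fin n → ℝ) :
    sInf {c : ℝ | ∃ u : ℝ → Fin k → ℝ, Continuous u ∧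
        NormedSpace.exp (T • A) *ᵥ
          (x₁ + ∫ τ in (0:ℝ)..T, NormedSpace.exp (-τ • A) *ᵥ (B *ᵥ u τ)) = x₂ ∧
        c = (1/2) * ∫ s in (0:ℝ)..T, ∑ i, (u s i) ^ 2}
      = (1/2) * (((Gram A B T)⁻¹ *ᵥ (NormedSpace.exp (-T • A) *ᵥ x₂ - x₁)) ⬝ᵥ
          (Gram A B T *ᵥ ((Gram A B T)⁻¹ *ᵥ (NormedSpace.exp (-T • A) *ᵥ x₂ - x₁)))) ∧
    (1/2) * (((Gram A B T)⁻¹ *ᵥ (NormedSpace.exp (-T • A) *ᵥ x₂ - x₁)) ⬝ᵥ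
          (Gram A B T *ᵥ ((Gram A B T)⁻¹ *ᵥ (NormedSpace.exp (-T • A) *ᵥ x₂ - x₁))))
      = (1/2) * ((NormedSpace.exp (-T • A) *ᵥ x₂ - x₁) ⬝ᵥ
          ((Gram A B T)⁻¹ *ᵥ (NormedSpace.exp (-T • A) *ᵥ x₂ - x₁))) :=
  optimal_cost_LQ_general A B hKalman T hT x₁ x₂
end
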